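/- arXiv:2205.02467 — 3 statements merged into one kernel-verified Lean document; each statement's English description precedes it below -/
import Mathlib

section
/- Let C₀, C₁ > 0 be real numbers and define φ : (0,1) → ℝ by φ(t) := C₀(√t + √(1−t)) + C₁(t³ + (1−t)³). If t₀ ∈ (0,1) satisfies φ(t) ≥ φ(t₀) for all t ∈ (0,1), then t₀ = 1/2. -/
open Real Set

set_option maxHeartbeats 1000000 in
/-- Auxiliary lemma: a minimizer cannot be below `1/2`. -/
theorem aux_not_lt (C₀ C₁ : ℝ) (hC₀ : 0 < C₀) (hC₁ : 0 < C₁)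
    (φ : ℝ → ℝ)
    (hφ : ∀ t ∈ Set.Ioo (0:ℝ) 1,
      φ t = C₀ * (Real.sqrt t + Real.sqrt (1 - t)) + C₁ * (t^3 + (1 - t)^3))
    (t₀ : ℝ) (ht₀ : t₀ ∈ Set.Ioo (0:ℝ) 1)
    (hmin : ∀ t ∈ Set.Ioo (0:ℝ) 1, φ t₀ ≤ φ t) :
    ¬ t₀ < 1/2 := by
  intro hlt
  obtain ⟨ht0, ht1⟩ := ht₀
  -- derivative of φ at any point of Ioo 0 1
  have key : ∀ t ∈ Set.Ioo (0:ℝ) 1, HasDerivAt φ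
      ((Real.sqrt (1-t) - Real.sqrt t) *
        (C₀ / (2 * (Real.sqrt t * Real.sqrt (1-t))) -
          3 * C₁ * (Real.sqrt t + Real.sqrt (1-t)))) t := by
    intro t ht
    obtain ⟨h0, h1'⟩ := ht
    have hu : (0:ℝ) < Real.sqrt t := Real.sqrt_pos.2 h0
    have hv : (0:ℝ) < Real.sqrt (1-t) := Real.sqrt_pos.2 (by linarith)
    have h2 : HasDerivAt (fun s : ℝ => 1 - s) (-1) t := (hasDerivAt_id t).const_sub 1
    have h1 : HasDerivAt Real.sqrt (1/(2*Real.sqrt t)) t :=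
      Real.hasDerivAt_sqrt (ne_of_gt h0)
    have h3 : HasDerivAt (fun s : ℝ => Real.sqrt (1-s)) (1/(2*Real.sqrt (1-t)) * (-1)) t :=
      (Real.hasDerivAt_sqrt (by intro h; linarith [h] : (1:ℝ) - t ≠ 0)).comp t h2
    have h4 : HasDerivAt (fun s : ℝ => s^3) (3*t^2) t := by
      simpa using hasDerivAt_pow 3 t
    have h5 : HasDerivAt (fun s : ℝ => (1-s)^3) (3*(1-t)^2 * (-1)) t := by
      have := h2.fun_pow 3
      simpa using this
    have hg : HasDerivAt
        (fun s => C₀ * (Real.sqrt s + Real.sqrt (1-s)) + C₁ * (s^3 + (1-s)^3))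
        (C₀ * (1/(2*Real.sqrt t) + 1/(2*Real.sqrt (1-t)) * (-1)) +
          C₁ * (3*t^2 + 3*(1-t)^2 * (-1))) t :=
      ((h1.add h3).const_mul C₀).add ((h4.add h5).const_mul C₁)
    have heq : φ =ᶠ[nhds t]
        fun s => C₀ * (Real.sqrt s + Real.sqrt (1-s)) + C₁ * (s^3 + (1-s)^3) := by
      filter_upwards [Ioo_mem_nhds h0 h1'] with s hs using hφ s hs
    have hφd := hg.congr_of_eventuallyEq heq
    refine hφd.congr_deriv ?_
    symm
    have hu2 : Real.sqrt t ^ 2 = t := Real.sq_sqrt h0.le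
    have hv2 : Real.sqrt (1-t) ^ 2 = 1 - t := Real.sq_sqrt (by linarith)
    have e : t^2 - (1-t)^2 = Real.sqrt t ^ 2 - Real.sqrt (1-t) ^ 2 := by
      rw [hu2, hv2]; ring
    have e2 : C₁ * (3*t^2 + 3*(1-t)^2 * (-1)) =
        3 * C₁ * (Real.sqrt t ^ 2 - Real.sqrt (1-t) ^ 2) := by
      rw [hu2, hv2]; ring
    rw [e2]
    field_simp
    ring
  -- critical point equation at t₀
  have ht₀' : t₀ ∈ Set.Ioo (0:ℝ) 1 := ⟨ht0, ht1⟩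
  have hlocmin : IsLocalMin φ t₀ := by
    filter_upwards [Ioo_mem_nhds ht0 ht1] with s hs using hmin s hs
  have hcrit := hlocmin.hasDerivAt_eq_zero (key t₀ ht₀')
  set u₀ := Real.sqrt t₀ with hu₀def
  set v₀ := Real.sqrt (1-t₀) with hv₀def
  have hu₀ : (0:ℝ) < u₀ := Real.sqrt_pos.2 ht0
  have hv₀ : (0:ℝ) < v₀ := Real.sqrt_pos.2 (by linarith)
  have huv₀ : u₀ < v₀ := by
    apply Real.sqrt_lt_sqrt ht0.le
    linarith
  have hC₀eq : C₀ = 6 * C₁ * (u₀ * v₀) * (u₀ + v₀) := by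
    have hne : v₀ - u₀ ≠ 0 := by linarith
    have := mul_eq_zero.1 hcrit
    rcases this with h | h
    · exact absurd h (sub_ne_zero.2 (ne_of_gt huv₀))
    · have h' : C₀ / (2 * (u₀ * v₀)) = 3 * C₁ * (u₀ + v₀) := by linarith
      field_simp at h'
      linarith
  -- φ is strictly decreasing on [t₀, 1/2]
  have hsub : Set.Icc t₀ (1/2 : ℝ) ⊆ Set.Ioo (0:ℝ) 1 := by
    intro x hx
    exact ⟨lt_of_lt_of_le ht0 hx.1, by linarith [hx.2]⟩
  have hcont : ContinuousOn φ (Set.Icc t₀ (1/2)) := by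
    have hgc : Continuous (fun s : ℝ =>
        C₀ * (Real.sqrt s + Real.sqrt (1-s)) + C₁ * (s^3 + (1-s)^3)) := by
      exact (continuous_const.mul (Real.continuous_sqrt.add
          (Real.continuous_sqrt.comp (continuous_const.sub continuous_id)))).add
        (continuous_const.mul ((continuous_pow 3).add
          ((continuous_const.sub continuous_id).pow 3)))
    exact hgc.continuousOn.congr (fun x hx => hφ x (hsub hx))
  have hanti : StrictAntiOn φ (Set.Icc t₀ (1/2)) := by
    apply strictAntiOn_of_deriv_neg (convex_Icc _ _) hcont
    intro x hx
    rw [interior_Icc] at hx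
    have hxIoo : x ∈ Set.Ioo (0:ℝ) 1 := hsub ⟨hx.1.le, hx.2.le⟩
    have hdx := (key x hxIoo).deriv
    rw [hdx]
    set u := Real.sqrt x with hudef
    set v := Real.sqrt (1-x) with hvdef
    have hu : (0:ℝ) < u := Real.sqrt_pos.2 hxIoo.1
    have hv : (0:ℝ) < v := Real.sqrt_pos.2 (by linarith [hxIoo.2])
    have huv : u < v := by
      apply Real.sqrt_lt_sqrt hxIoo.1.le
      linarith [hx.2]
    -- u₀ v₀ < u v
    have hP : u₀ * v₀ < u * v := by
      have hsq : (u₀ * v₀)^2 < (u * v)^2 := by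
        have e1 : (u₀ * v₀)^2 = t₀ * (1 - t₀) := by
          rw [mul_pow, Real.sq_sqrt ht0.le, Real.sq_sqrt (by linarith : (0:ℝ) ≤ 1 - t₀)]
        have e2 : (u * v)^2 = x * (1 - x) := by
          rw [mul_pow, Real.sq_sqrt hxIoo.1.le,
            Real.sq_sqrt (by linarith [hxIoo.2] : (0:ℝ) ≤ 1 - x)]
        rw [e1, e2]
        nlinarith [mul_pos (show (0:ℝ) < x - t₀ by linarith [hx.1])
          (show (0:ℝ) < 1 - x - t₀ by linarith [hx.2])]
      exact lt_of_pow_lt_pow_left₀ 2 (mul_pos hu hv).le hsq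
    have hS : u₀ + v₀ < u + v := by
      have hsq : (u₀ + v₀)^2 < (u + v)^2 := by
        have e1 : (u₀ + v₀)^2 = 1 + 2 * (u₀ * v₀) := by
          linear_combination Real.sq_sqrt ht0.le +
            Real.sq_sqrt (by linarith : (0:ℝ) ≤ 1 - t₀)
        have e2 : (u + v)^2 = 1 + 2 * (u * v) := by
          linear_combination Real.sq_sqrt hxIoo.1.le +
            Real.sq_sqrt (by linarith [hxIoo.2] : (0:ℝ) ≤ 1 - x)
        rw [e1, e2]; linarith
      exact lt_of_pow_lt_pow_left₀ 2 (by positivity) hsq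
    have hprod : 6 * C₁ * (u₀ * v₀) * (u₀ + v₀) < 6 * C₁ * (u * v) * (u + v) := by
      have h1 : (u₀ * v₀) * (u₀ + v₀) < (u * v) * (u + v) :=
        mul_lt_mul'' hP hS (mul_pos hu₀ hv₀).le (by positivity)
      have h6 : (0:ℝ) < 6 * C₁ := by linarith
      calc 6 * C₁ * (u₀ * v₀) * (u₀ + v₀) = 6 * C₁ * ((u₀ * v₀) * (u₀ + v₀)) := by ring
        _ < 6 * C₁ * ((u * v) * (u + v)) := by
            exact mul_lt_mul_of_pos_left h1 h6
        _ = 6 * C₁ * (u * v) * (u + v) := by ring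
    have hbr : C₀ / (2 * (u * v)) - 3 * C₁ * (u + v) < 0 := by
      rw [sub_neg, div_lt_iff₀ (by positivity : (0:ℝ) < 2 * (u * v))]
      calc C₀ = 6 * C₁ * (u₀ * v₀) * (u₀ + v₀) := hC₀eq
        _ < 6 * C₁ * (u * v) * (u + v) := hprod
        _ = 3 * C₁ * (u + v) * (2 * (u * v)) := by ring
    have hvu : 0 < v - u := by linarith
    exact mul_neg_of_pos_of_neg hvu hbr
  -- conclude
  have hmem1 : t₀ ∈ Set.Icc t₀ (1/2 : ℝ) := ⟨le_refl _, hlt.le⟩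
  have hmem2 : (1/2 : ℝ) ∈ Set.Icc t₀ (1/2 : ℝ) := ⟨hlt.le, le_refl _⟩
  have := hanti hmem1 hmem2 hlt
  have hhalf : (1/2 : ℝ) ∈ Set.Ioo (0:ℝ) 1 := by norm_num
  have := hmin _ hhalf
  linarith

theorem stmt0 (C₀ C₁ : ℝ) (hC₀ : 0 < C₀) (hC₁ : 0 < C₁)
    (φ : ℝ → ℝ)
    (hφ : ∀ t ∈ Set.Ioo (0:ℝ) 1,
      φ t = C₀ * (Real.sqrt t + Real.sqrt (1 - t)) + C₁ * (t^3 + (1 - t)^3))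
    (t₀ : ℝ) (ht₀ : t₀ ∈ Set.Ioo (0:ℝ) 1)
    (hmin : ∀ t ∈ Set.Ioo (0:ℝ) 1, φ t₀ ≤ φ t) :
    t₀ = 1/2 := by
  have h1 := aux_not_lt C₀ C₁ hC₀ hC₁ φ hφ t₀ ht₀ hmin
  have ht₀' : (1 - t₀) ∈ Set.Ioo (0:ℝ) 1 := ⟨by linarith [ht₀.2], by linarith [ht₀.1]⟩
  have hsym : φ (1 - t₀) = φ t₀ := by
    rw [hφ _ ht₀', hφ _ ht₀]
    have h : (1:ℝ) - (1 - t₀) = t₀ := by ring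
    rw [h]; ring
  have h2 := aux_not_lt C₀ C₁ hC₀ hC₁ φ hφ (1 - t₀) ht₀'
    (fun t ht => hsym ▸ hmin t ht)
  push_neg at h1 h2
  linarith
end

section
/- Let α, β > 0, M > 0, and for c ≥ 0 and b > a define the function Φ(c) := (βM²/4)(b−a)³ + βM(b−a)²c + β(b−a)c² − 2α(c + M(b−a)/2)^{1/2}. If β²M³(b−a)⁵ > 64α², then Φ(c) > 0 for every c ≥ 0. -/
/-!
With `L = b - a` and `t = c + M L / 2` the function equals `β L t² - 2α √t = √t (β L t^{3/2} - 2α)`.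
Since `t ≥ M L / 2`, `(β L t^{3/2})² ≥ β² M³ L⁵ / 8 > 8α²`, so the second factor is positive.
-/

lemma mul_sqrt_lt_mul_sq {x p t : ℝ} (hp : 0 ≤ p) (h : x ^ 2 < p ^ 2 * t ^ 3) :
    x * √t < p * t ^ 2 := by
  have ht : 0 < t := by
    have : 0 < p ^ 2 * t ^ 3 := (sq_nonneg x).trans_lt h
    exact Odd.pow_pos_iff (by decide) |>.mp (pos_of_mul_pos_right this (sq_nonneg p))
  set s := √t
  have hs : 0 < s := Real.sqrt_pos.mpr ht
  have hts : t = s ^ 2 := (Real.sq_sqrt ht.le).symm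
  have hx : x < p * s ^ 3 := by
    refine (le_abs_self x).trans_lt (abs_lt_of_sq_lt_sq ?_ (by positivity))
    rw [hts] at h
    linarith [show (p * s ^ 3) ^ 2 = p ^ 2 * (s ^ 2) ^ 3 by ring]
  calc x * s < p * s ^ 3 * s := mul_lt_mul_of_pos_right hx hs
    _ = p * t ^ 2 := by rw [hts]; ring

theorem stmt15_general (α β M a b : ℝ) (hβ : 0 < β) (hM : 0 < M)
    (hab : a < b) (h : 64*α^2 < β^2*M^3*(b-a)^5) :
    ∀ c : ℝ, 0 ≤ c →
      0 < β*M^2/4*(b-a)^3 + β*M*(b-a)^2*c + β*(b-a)*c^2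
            - 2*α*Real.sqrt (c + M*(b-a)/2) := by
  intro c hc
  set L := b - a
  set t := c + M * L / 2
  have hL : 0 < L := sub_pos.mpr hab
  have hΦ : β*M^2/4*L^3 + β*M*L^2*c + β*L*c^2 = β * L * t ^ 2 := by ring
  have hcube : (M * L / 2) ^ 3 ≤ t ^ 3 := by gcongr; exact le_add_of_nonneg_left hc
  have key : (2 * α) ^ 2 < (β * L) ^ 2 * t ^ 3 :=
    calc (2 * α) ^ 2 < β^2*M^3*L^5 / 8 := by nlinarith
      _ = (β * L) ^ 2 * (M * L / 2) ^ 3 := by ring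
      _ ≤ (β * L) ^ 2 * t ^ 3 := by gcongr
  rw [hΦ, sub_pos]
  exact mul_sqrt_lt_mul_sq (by positivity) key

theorem stmt15 (α β M a b : ℝ) (hα : 0 < α) (hβ : 0 < β) (hM : 0 < M)
    (hab : a < b) (h : 64*α^2 < β^2*M^3*(b-a)^5) :
    ∀ c : ℝ, 0 ≤ c →
      0 < β*M^2/4*(b-a)^3 + β*M*(b-a)^2*c + β*(b-a)*c^2
            - 2*α*Real.sqrt (c + M*(b-a)/2) :=
  stmt15_general α β M a b hβ hM hab h
end

section
/- Let z₁ < z₂ < z₃ be reals, M > 0, α, β > 0, and for τ ∈ (z₁,z₃) define E(τ) := α√M·(√(τ−z₁) + √(z₃−τ)) + (βM²/12)·((τ−z₁)³ + (z₃−τ)³). If τ₀ ∈ (z₁,z₃) minimizes E, then τ₀ = (z₁+z₃)/2. -/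
set_option maxHeartbeats 1000000

theorem stmt17 (α β M z₁ z₃ : ℝ) (hα : 0 < α) (hβ : 0 < β) (hM : 0 < M)
    (hz : z₁ < z₃)
    (E : ℝ → ℝ)
    (hE : ∀ τ ∈ Set.Ioo z₁ z₃,
      E τ = α * Real.sqrt M * (Real.sqrt (τ - z₁) + Real.sqrt (z₃ - τ)) +
        β*M^2/12 * ((τ - z₁)^3 + (z₃ - τ)^3))
    (τ₀ : ℝ) (hτ₀ : τ₀ ∈ Set.Ioo z₁ z₃)
    (hmin : ∀ τ ∈ Set.Ioo z₁ z₃, E τ₀ ≤ E τ) :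
    τ₀ = (z₁ + z₃)/2 := by
  obtain ⟨h1, h3⟩ := hτ₀
  by_contra hne
  set C : ℝ := α * Real.sqrt M with hCdef
  set D : ℝ := β * M ^ 2 / 12 with hDdef
  have hC : 0 < C := mul_pos hα (Real.sqrt_pos.mpr hM)
  have hD : 0 < D := by positivity
  have ha : (0:ℝ) < τ₀ - z₁ := by linarith
  have hb : (0:ℝ) < z₃ - τ₀ := by linarith
  set F : ℝ → ℝ := fun τ => C * (Real.sqrt (τ - z₁) + Real.sqrt (z₃ - τ)) +
      D * ((τ - z₁)^3 + (z₃ - τ)^3) with hFdef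
  have hnhds : Set.Ioo z₁ z₃ ∈ nhds τ₀ := Ioo_mem_nhds h1 h3
  have hlocF : IsLocalMin F τ₀ := by
    have hEF : ∀ τ ∈ Set.Ioo z₁ z₃, E τ = F τ := by
      intro τ hτ; rw [hE τ hτ]
    filter_upwards [hnhds] with τ hτ
    rw [← hEF τ hτ, ← hEF τ₀ ⟨h1, h3⟩]
    exact hmin τ hτ
  -- derivative of F at τ₀
  set p : ℝ := Real.sqrt (τ₀ - z₁) with hpdef
  set q : ℝ := Real.sqrt (z₃ - τ₀) with hqdef
  have hp : 0 < p := Real.sqrt_pos.mpr ha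
  have hq : 0 < q := Real.sqrt_pos.mpr hb
  have hpa : p ^ 2 = τ₀ - z₁ := Real.sq_sqrt ha.le
  have hqb : q ^ 2 = z₃ - τ₀ := Real.sq_sqrt hb.le
  have hd1 : HasDerivAt (fun τ : ℝ => Real.sqrt (τ - z₁)) (1 / (2 * p)) τ₀ := by
    have h := (Real.hasDerivAt_sqrt (ne_of_gt ha)).comp τ₀
      ((hasDerivAt_id τ₀).sub_const z₁)
    simpa [Function.comp_def, hpdef] using h
  have hd2 : HasDerivAt (fun τ : ℝ => Real.sqrt (z₃ - τ)) (-(1 / (2 * q))) τ₀ := by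
    have h := (Real.hasDerivAt_sqrt (ne_of_gt hb)).comp τ₀
      ((hasDerivAt_id τ₀).const_sub z₃)
    simpa [Function.comp_def, hqdef] using h
  have hd3 : HasDerivAt (fun τ : ℝ => (τ - z₁)^3) (3 * (τ₀ - z₁)^2) τ₀ := by
    have h := ((hasDerivAt_id τ₀).sub_const z₁).pow 3
    simpa [Pi.pow_def] using h
  have hd4 : HasDerivAt (fun τ : ℝ => (z₃ - τ)^3) (-(3 * (z₃ - τ₀)^2)) τ₀ := by
    have h := ((hasDerivAt_id τ₀).const_sub z₃).pow 3
    simpa [Pi.pow_def] using h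
  have hdF : HasDerivAt F
      (C * (1 / (2 * p) + -(1 / (2 * q))) + D * (3 * (τ₀ - z₁)^2 + -(3 * (z₃ - τ₀)^2))) τ₀ :=
    ((hd1.add hd2).const_mul C).add ((hd3.add hd4).const_mul D)
  have hcrit : C * (1 / (2 * p) + -(1 / (2 * q))) + D * (3 * (τ₀ - z₁)^2 + -(3 * (z₃ - τ₀)^2)) = 0 :=
    hlocF.hasDerivAt_eq_zero hdF
  -- p ≠ q
  have hpq : p ≠ q := by
    intro h
    apply hne
    have : τ₀ - z₁ = z₃ - τ₀ := by rw [← hpa, ← hqb, h]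
    linarith
  -- criticality: C = 6 D p q (p+q) (p²+q²)
  have hCval : C = 6 * D * p * q * (p + q) * (p^2 + q^2) := by
    have hcrit' : C * (q - p) = 6 * D * p * q * (p + q) * (p^2 + q^2) * (q - p) := by
      have h2 : C * (1 / (2 * p)) - C * (1 / (2 * q)) = 3 * D * ((q^2)^2 - (p^2)^2) := by
        rw [hpa, hqb]; nlinarith [hcrit]
      field_simp at h2
      nlinarith [h2]
    have hqp : q - p ≠ 0 := sub_ne_zero.mpr (Ne.symm hpq)
    exact mul_right_cancel₀ hqp hcrit'
  -- global minimality vs midpoint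
  set w : ℝ := Real.sqrt ((z₃ - z₁) / 2) with hwdef
  have hwpos : 0 < w := Real.sqrt_pos.mpr (by linarith)
  have hw2 : w ^ 2 = (z₃ - z₁) / 2 := Real.sq_sqrt (by linarith)
  have hww : 2 * w ^ 2 = p ^ 2 + q ^ 2 := by rw [hpa, hqb, hw2]; ring
  have hmid : (z₁ + z₃) / 2 ∈ Set.Ioo z₁ z₃ := ⟨by linarith, by linarith⟩
  have hglob : E τ₀ ≤ E ((z₁ + z₃) / 2) := hmin _ hmid
  rw [hE τ₀ ⟨h1, h3⟩, hE _ hmid] at hglob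
  have hm1 : (z₁ + z₃) / 2 - z₁ = (z₃ - z₁) / 2 := by ring
  have hm2 : z₃ - (z₁ + z₃) / 2 = (z₃ - z₁) / 2 := by ring
  rw [hm1, hm2] at hglob
  have hglob' : C * (p + q) + D * (p^6 + q^6) ≤ C * (2 * w) + D * (2 * w^6) := by
    have h6a : (τ₀ - z₁) ^ 3 = p ^ 6 := by rw [← hpa]; ring
    have h6b : (z₃ - τ₀) ^ 3 = q ^ 6 := by rw [← hqb]; ring
    have h6w : ((z₃ - z₁) / 2) ^ 3 = w ^ 6 := by rw [← hw2]; ring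
    calc C * (p + q) + D * (p^6 + q^6)
        = C * (p + q) + D * ((τ₀ - z₁)^3 + (z₃ - τ₀)^3) := by rw [h6a, h6b]
      _ ≤ C * (w + w) + D * (((z₃ - z₁)/2)^3 + ((z₃ - z₁)/2)^3) := hglob
      _ = C * (2 * w) + D * (2 * w^6) := by rw [h6w]; ring
  -- final contradiction
  have h2w : p + q ≤ 2 * w := by
    nlinarith [sq_nonneg (p - q), sq_nonneg (p + q - 2*w), hwpos, hp, hq]
  have hpqsq : 0 < (p - q) ^ 2 :=
    lt_of_le_of_ne (sq_nonneg _) (Ne.symm (pow_ne_zero 2 (sub_ne_zero.mpr hpq)))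
  have hid : (2 * w - (p + q)) * (2 * w + (p + q)) = (p - q) ^ 2 := by
    linear_combination 2 * hww
  have hws : 0 < 2 * w + (p + q) := by linarith
  have h8 : 8 * p * q < (p + q) * (2 * w + (p + q)) := by
    have hs2 : (p + q) * (2 * (p + q)) ≤ (p + q) * (2 * w + (p + q)) :=
      mul_le_mul_of_nonneg_left (by linarith) (by positivity)
    nlinarith [hs2, hpqsq]
  have hkey2 : 8 * p * q * (2 * w - (p + q)) < (p - q) ^ 2 * (p + q) := by
    have hA : 8 * p * q * (2 * w - (p + q)) * (2 * w + (p + q)) =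
        (p - q) ^ 2 * (8 * p * q) := by linear_combination 8 * p * q * hid
    have hB : 8 * p * q * (2 * w - (p + q)) * (2 * w + (p + q)) <
        (p - q) ^ 2 * (p + q) * (2 * w + (p + q)) := by
      have h9 := mul_lt_mul_of_pos_left h8 hpqsq
      linarith [h9, hA]
    exact lt_of_mul_lt_mul_right hB hws.le
  have hident : p^6 + q^6 - 2 * w^6 = (3/2) * w^2 * (p - q)^2 * (p + q)^2 := by
    linear_combination (-(w^4) - (p^2+q^2)/2 * w^2 - (3/4)*(p^2-q^2)^2 - (p^2+q^2)^2/4) * hww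
  -- substitute C and derive contradiction
  rw [hCval] at hglob'
  have e1 : 6 * D * p * q * (p + q) * (p ^ 2 + q ^ 2) * (2 * w) =
      D * (24 * p * q * (p + q) * w ^ 3) := by rw [← hww]; ring
  have e2 : 6 * D * p * q * (p + q) * (p ^ 2 + q ^ 2) * (p + q) =
      D * (12 * p * q * (p + q) ^ 2 * w ^ 2) := by rw [← hww]; ring
  rw [e1, e2] at hglob'
  have h3 : 12 * p * q * w ^ 2 * (p + q) * (2 * w - (p + q)) <
      (3/2) * w ^ 2 * (p - q) ^ 2 * (p + q) ^ 2 := by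
    have hpos : (0:ℝ) < (3/2) * w ^ 2 * (p + q) :=
      mul_pos (mul_pos (by norm_num) (by positivity)) (by linarith)
    have h10 := mul_lt_mul_of_pos_left hkey2 hpos
    linarith [h10]
  have h4 : 24 * p * q * (p + q) * w ^ 3 + 2 * w ^ 6 -
      (12 * p * q * (p + q) ^ 2 * w ^ 2 + (p ^ 6 + q ^ 6)) =
      12 * p * q * w ^ 2 * (p + q) * (2 * w - (p + q)) -
      (3/2) * w ^ 2 * (p - q) ^ 2 * (p + q) ^ 2 := by linear_combination -hident
  have hstrict : 24 * p * q * (p + q) * w ^ 3 + 2 * w ^ 6 <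
      12 * p * q * (p + q) ^ 2 * w ^ 2 + (p ^ 6 + q ^ 6) := by linarith [h3, h4]
  have hfin := mul_lt_mul_of_pos_left hstrict hD
  linarith [hfin, hglob']
end
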